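/- arXiv:0812.1634 — 7 statements merged into one kernel-verified Lean document; each statement's English description precedes it below -/
import Mathlib

section
/- Let s ≥ 2 be an integer and let λ be an s-minimal biliaison type with s-dual λ′. Then u_{λ′} = u_λ, d_{λ′} = u_λ·s − d_λ, and q_s(λ′) = q_s(λ). -/
/-- An `s`-minimal biliaison type: a strictly increasing finite sequence of
positive integers, all strictly less than `s` (the empty sequence is allowed). -/
def SMinimal (s : ℕ) (l : List ℕ) : Prop :=
  l.Chain' (· < ·) ∧ ∀ k ∈ l, 0 < k ∧ k < s

/-- The quadratic form `q_s(λ) = Σ_i k_i(s−1)(s−k_i) − 2 Σ_{i<j} k_i(s−k_j)`. -/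
def qform (s : ℕ) (l : List ℕ) : ℤ :=
  (∑ i : Fin l.length, (l.get i : ℤ) * ((s : ℤ) - 1) * ((s : ℤ) - l.get i))
  - 2 * ∑ i : Fin l.length, ∑ j : Fin l.length,
      if (i : ℕ) < (j : ℕ) then (l.get i : ℤ) * ((s : ℤ) - l.get j) else 0

/-- The `s`-dual `λ′ = (s−k_u, …, s−k_1)` of a biliaison type. -/
def sdual (s : ℕ) (l : List ℕ) : List ℕ := (l.map (fun k => s - k)).reverse

/-!
Both summands of `q_s` are invariant under `k ↦ s - k` combined with reversing the order: the
diagonal term `k (s - 1) (s - k)` is symmetric in `k` and `s - k`, and reversal turns the pairs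
`i < j` into pairs `j < i`, so the cross term `k_i (s - k_j)` becomes `(s - k_i) k_j` summed
over `j < i`, which is the same sum with the roles of the indices swapped.
-/

section QformFin

variable {R : Type*} [CommRing R]

def qformFin {n : ℕ} (s : R) (a : Fin n → R) : R :=
  (∑ i : Fin n, a i * (s - 1) * (s - a i))
  - 2 * ∑ i : Fin n, ∑ j : Fin n, if (i : ℕ) < (j : ℕ) then a i * (s - a j) else 0

theorem qformFin_sub_rev {n : ℕ} (s : R) (a : Fin n → R) :
    qformFin s (fun i => s - a i.rev) = qformFin s a := by
  have diag : ∑ i : Fin n, (s - a i.rev) * (s - 1) * (s - (s - a i.rev))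
      = ∑ i : Fin n, a i * (s - 1) * (s - a i) :=
    Fintype.sum_equiv Fin.revPerm _ _ fun i => by simp only [Fin.revPerm_apply]; ring
  have cross : ∑ i : Fin n, ∑ j : Fin n,
        (if (i : ℕ) < (j : ℕ) then (s - a i.rev) * (s - (s - a j.rev)) else 0)
      = ∑ i : Fin n, ∑ j : Fin n, if (i : ℕ) < (j : ℕ) then a i * (s - a j) else 0 := by
    rw [Finset.sum_comm]
    refine Fintype.sum_equiv Fin.revPerm _ _ fun j => ?_
    refine Fintype.sum_equiv Fin.revPerm _ _ fun i => ?_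
    simp only [Fin.revPerm_apply, ← Fin.lt_def, Fin.rev_lt_rev]
    split_ifs <;> ring
  rw [qformFin, qformFin, diag, cross]

end QformFin

theorem qform_eq_qformFin (s : ℕ) (l : List ℕ) :
    qform s l = qformFin (s : ℤ) (fun i => (l.get i : ℤ)) :=
  rfl

theorem qform_eq_qformFin_of_length_eq {s n : ℕ} {l : List ℕ} (h : l.length = n)
    (a : Fin n → ℤ) (ha : ∀ i, (l.get i : ℤ) = a (Fin.cast h i)) :
    qform s l = qformFin (s : ℤ) a := by
  subst h
  simp only [Fin.cast_eq_self] at ha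
  rw [qform_eq_qformFin, funext ha]

theorem length_sdual (s : ℕ) (l : List ℕ) : (sdual s l).length = l.length := by
  simp [sdual]

theorem getElem_sdual {s : ℕ} {l : List ℕ} {i : ℕ} (hi : i < (sdual s l).length) :
    (sdual s l)[i] = s - l[l.length - 1 - i]'(by rw [length_sdual] at hi; omega) := by
  simp [sdual]

theorem get_sdual {s : ℕ} {l : List ℕ} (i : Fin (sdual s l).length) :
    (sdual s l).get i = s - l.get (Fin.cast (length_sdual s l) i).rev := by
  simp only [List.get_eq_getElem, getElem_sdual, Fin.val_rev, Fin.val_cast]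
  congr 2
  omega

theorem sum_sdual {s : ℕ} {l : List ℕ} (hl : ∀ k ∈ l, k ≤ s) :
    ((sdual s l).sum : ℤ) = l.length * s - l.sum := by
  rw [sdual, List.sum_reverse]
  induction l with
  | nil => simp
  | cons k l ih =>
    simp only [List.forall_mem_cons] at hl
    simp only [List.map_cons, List.sum_cons, List.length_cons, Nat.cast_add, Nat.cast_sub hl.1,
      ih hl.2]
    push_cast
    ring

theorem qform_sdual {s : ℕ} {l : List ℕ} (hl : ∀ k ∈ l, k ≤ s) :
    qform s (sdual s l) = qform s l := by
  rw [qform_eq_qformFin s l, ← qformFin_sub_rev]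
  refine qform_eq_qformFin_of_length_eq (length_sdual s l) _ fun i => ?_
  rw [get_sdual, Nat.cast_sub (hl _ (List.get_mem _ _))]

theorem stmt0_general (s : ℕ) (l : List ℕ) (hl : SMinimal s l) :
    (sdual s l).length = l.length ∧
    ((sdual s l).sum : ℤ) = (l.length : ℤ) * s - l.sum ∧
    qform s (sdual s l) = qform s l := by
  have hle : ∀ k ∈ l, k ≤ s := fun k hk => (hl.2 k hk).2.le
  exact ⟨length_sdual s l, sum_sdual hle, qform_sdual hle⟩

/-- The invariants of the `s`-dual: same length, degree `u·s − d`, same `q_s`. -/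
theorem stmt0 (s : ℕ) (hs : 2 ≤ s) (l : List ℕ) (hl : SMinimal s l) :
    (sdual s l).length = l.length ∧
    ((sdual s l).sum : ℤ) = (l.length : ℤ) * s - l.sum ∧
    qform s (sdual s l) = qform s l :=
  stmt0_general s l hl
end

section
/- Let s ≥ 2 be an integer, let k be a positive integer with k + 1 < s, and let λ and μ be s-minimal biliaison types such that every entry of λ is < k and every entry of μ is > k + 1. Then q_s(λ ∪ (k+1) ∪ μ) − q_s(λ ∪ (k) ∪ μ) = (s−1)(s−1−2k) − 2(d_{μ′} − d_λ), where (k) denotes the one-term sequence with entry k and μ′ is the s-dual of μ. -/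
/-! Concatenation interacts with `q_s` through a single cross term:
`q_s(λ ∪ ν) = q_s(λ) + q_s(ν) − 2 d_λ · Σ_{b ∈ ν}(s−b)`. For `ν = (k) ∪ μ` and `ν = (k+1) ∪ μ`
everything but the terms of the middle entry cancels, and `Σ_{b ∈ μ}(s−b) = d_{μ′}` once the
entries of `μ` are at most `s`, so that the truncated subtraction in `sdual` is exact. -/

section

variable (s : ℕ)

theorem qform_nil : qform s [] = 0 := by
  simp [qform]

theorem qform_cons (a : ℕ) (t : List ℕ) :
    qform s (a :: t) = (a : ℤ) * ((s : ℤ) - 1) * ((s : ℤ) - a)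
      - 2 * a * (t.map fun b : ℕ => (s : ℤ) - b).sum + qform s t := by
  simp only [qform, List.length_cons, Fin.sum_univ_succ, Fin.val_succ, Fin.val_zero,
    Nat.succ_lt_succ_iff, Nat.not_lt_zero, if_false, Nat.zero_lt_succ, if_true,
    List.get_eq_getElem, List.getElem_cons_zero, List.getElem_cons_succ, zero_add,
    ← Fin.sum_univ_fun_getElem t fun b : ℕ => (s : ℤ) - b]
  rw [← Finset.mul_sum]
  ring

theorem qform_append (l m : List ℕ) :
    qform s (l ++ m) = qform s l + qform s m
      - 2 * (l.sum : ℤ) * (m.map fun b : ℕ => (s : ℤ) - b).sum := by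
  induction l with
  | nil => simp [qform_nil]
  | cons a t ih =>
    rw [List.cons_append, qform_cons, qform_cons, ih, List.map_append, List.sum_append,
      List.sum_cons]
    push_cast
    ring

theorem sdual_sum_cast {m : List ℕ} (h : ∀ b ∈ m, b ≤ s) :
    ((sdual s m).sum : ℤ) = (m.map fun b : ℕ => (s : ℤ) - b).sum := by
  rw [sdual, List.sum_reverse, Nat.cast_list_sum, List.map_map]
  exact congrArg List.sum (List.map_congr_left fun b hb => Nat.cast_sub (h b hb))

end

theorem stmt2_general (s k : ℕ)
    (l m : List ℕ) (hm : SMinimal s m) :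
    qform s (l ++ [k + 1] ++ m) - qform s (l ++ [k] ++ m)
      = ((s : ℤ) - 1) * ((s : ℤ) - 1 - 2 * k)
        - 2 * (((sdual s m).sum : ℤ) - (l.sum : ℤ)) := by
  rw [sdual_sum_cast s fun b hb => (hm.2 b hb).2.le]
  simp only [List.append_assoc, List.singleton_append, qform_append, qform_cons,
    List.map_cons, List.sum_cons]
  push_cast
  ring

/-- Proposition 8.4(b): replacing the middle entry `k` by `k+1` changes `q_s` by
`(s−1)(s−1−2k) − 2(d_{μ′} − d_λ)`. -/
theorem stmt2 (s k : ℕ) (hs : 2 ≤ s) (hk : 0 < k) (hks : k + 1 < s)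
    (l m : List ℕ) (hl : SMinimal s l) (hm : SMinimal s m)
    (hlk : ∀ a ∈ l, a < k) (hkm : ∀ b ∈ m, k + 1 < b) :
    qform s (l ++ [k + 1] ++ m) - qform s (l ++ [k] ++ m)
      = ((s : ℤ) - 1) * ((s : ℤ) - 1 - 2 * k)
        - 2 * (((sdual s m).sum : ℤ) - (l.sum : ℤ)) :=
  stmt2_general s k l m hm
end

section
/- Let s ≥ 2 be an integer and let λ = (h, k) be an s-minimal biliaison type with two terms 1 ≤ h < k < s. Let f be the residue of h + k modulo s, with 0 ≤ f < s. Then q_s(λ) = f(s−1)(s−f) + 2h(k−1)s if h + k < s, and q_s(λ) = f(s−1)(s−f) + 2(s−k)(s−h−1)s if h + k ≥ s. -/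
/-- Proposition 8.7(a): the value of `q_s` on a two-term type `(h,k)`, in terms of
the residue `f` of `h+k` modulo `s`. -/
theorem stmt6 (s h k : ℕ) (hs : 2 ≤ s) (hh : 1 ≤ h) (hhk : h < k) (hks : k < s)
    (f : ℕ) (hf : f = (h + k) % s) :
    (h + k < s →
      qform s [h, k]
        = (f : ℤ) * ((s : ℤ) - 1) * ((s : ℤ) - f) + 2 * (h : ℤ) * ((k : ℤ) - 1) * s) ∧
    (s ≤ h + k →
      qform s [h, k]
        = (f : ℤ) * ((s : ℤ) - 1) * ((s : ℤ) - f)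
          + 2 * ((s : ℤ) - k) * ((s : ℤ) - h - 1) * s) := by
  have hq : qform s [h, k]
      = (h : ℤ) * ((s : ℤ) - 1) * ((s : ℤ) - h) + (k : ℤ) * ((s : ℤ) - 1) * ((s : ℤ) - k)
        - 2 * ((h : ℤ) * ((s : ℤ) - k)) := by
    simp [qform, Fin.sum_univ_succ]
  constructor
  · intro hlt
    have : f = h + k := by rw [hf, Nat.mod_eq_of_lt hlt]
    subst this
    rw [hq]
    push_cast
    ring
  · intro hge
    have hlt2 : h + k < 2 * s := by omega
    have : f = h + k - s := by
      rw [hf, Nat.mod_eq_sub_mod hge, Nat.mod_eq_of_lt (by omega)]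
    have hcast : (f : ℤ) = (h : ℤ) + k - s := by
      rw [this]; push_cast [Nat.cast_sub hge]; ring
    rw [hq, hcast]
    ring
end

section
/- Let s ≥ 3 be an integer and let λ be an s-minimal biliaison type with u_λ ≥ 2. Let f be the residue of d_λ modulo s, with 0 ≤ f < s. Then q_s(λ) ≥ 2s(s−2) if f = 0; q_s(λ) ≥ 3s² − 8s + 1 if f = 1 or f = s−1; and q_s(λ) ≥ 2s² − 4s + 4 if f ∉ {0, 1, s−1}. -/
open Finset

def qformLinear (s : ℕ) : List ℕ → ℤ
  | [] => 0
  | k :: t => k * (s - k - (2 * t.length + 1)) + qformLinear s t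

lemma qform_cons_s8 (s k : ℕ) (t : List ℕ) :
    qform s (k :: t) = qform s t + k * (s - 1) * (s - k) - 2 * k * (t.length * s - t.sum) := by
  simp only [qform, List.length_cons, List.get_eq_getElem, Fin.sum_univ_succ, Fin.coe_ofNat_eq_mod,
    Nat.zero_mod, List.getElem_cons_zero, Fin.val_succ, List.getElem_cons_succ, Fin.val_fin_lt,
    not_lt_zero, ↓reduceIte, zero_add, Fin.succ_pos, ← Finset.mul_sum, Finset.sum_sub_distrib,
    Finset.sum_const, Finset.card_univ, Fintype.card_fin, Int.nsmul_eq_mul,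
    Fin.sum_univ_fun_getElem, Fin.succ_lt_succ_iff, Nat.cast_list_sum]
  ring

lemma qform_eq_sq_add (s : ℕ) (l : List ℕ) :
    qform s l = (l.sum : ℤ) ^ 2 + s * qformLinear s l := by
  induction l with
  | nil => simp [qform, qformLinear]
  | cons k t ih =>
    rw [qform_cons_s8, ih, qformLinear, List.sum_cons]
    push_cast
    ring

lemma length_le_of_pairwise_lt {l : List ℕ} {m s : ℕ} (hl : l.Pairwise (· < ·))
    (h : ∀ x ∈ l, m < x ∧ x < s) : l.length ≤ s - m - 1 := by
  rw [← List.toFinset_card_of_nodup hl.nodup, ← Nat.card_Ioo]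
  exact card_le_card fun x hx => by simpa using h x (List.mem_toFinset.mp hx)

-- The lower end `m` makes the induction go through: the tail after an entry `k` lies above `k`.
lemma sum_range_le_qformLinear (s : ℕ) (l : List ℕ) (hl : l.Pairwise (· < ·)) (m : ℕ)
    (h : ∀ x ∈ l, m < x ∧ x < s) :
    ∑ i ∈ range l.length, ((m + i + 1 : ℤ) * (s - l.length + i))
      ≤ qformLinear s l + (l.length + m) * l.sum := by
  induction l generalizing m with
  | nil => simp [qformLinear]
  | cons k t ih =>
    obtain ⟨hkt, ht⟩ := List.pairwise_cons.mp hl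
    obtain ⟨hmk, hks⟩ := h k List.mem_cons_self
    have htail := ih ht (m + 1) fun x hx =>
      ⟨by have := hkt x hx; omega, (h x (List.mem_cons_of_mem k hx)).2⟩
    have hlen : t.length + k + 1 ≤ s := by
      have := length_le_of_pairwise_lt ht fun x hx =>
        ⟨hkt x hx, (h x (List.mem_cons_of_mem k hx)).2⟩
      omega
    have hhead : ((m : ℤ) + 1) * (s - (t.length + 1)) ≤ k * (s - t.length + m - k) := by
      have h1 : (m : ℤ) + 1 ≤ k := by exact_mod_cast hmk
      have h2 : (t.length : ℤ) + k + 1 ≤ s := by exact_mod_cast hlen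
      nlinarith [mul_nonneg (sub_nonneg.mpr h1) (by linarith : (0 : ℤ) ≤ s - t.length - 1 - k)]
    rw [List.length_cons, sum_range_succ', qformLinear, List.sum_cons]
    have hshift : ∑ i ∈ range t.length,
          ((m + (i + 1 : ℕ) + 1 : ℤ) * (s - (t.length + 1 : ℕ) + (i + 1 : ℕ)))
        = ∑ i ∈ range t.length, (((m + 1 : ℕ) + i + 1 : ℤ) * (s - t.length + i)) :=
      sum_congr rfl fun i _ => by push_cast; ring
    rw [hshift]
    push_cast at htail ⊢
    linarith

lemma six_mul_sum_range (c : ℤ) (u : ℕ) :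
    6 * ∑ i ∈ range u, ((i + 1 : ℤ) * (c + i))
      = 3 * c * u * (u + 1) + 2 * (u - 1) * u * (u + 1) := by
  induction u with
  | zero => simp
  | succ n ih =>
    rw [sum_range_succ, mul_add, ih]
    push_cast
    ring

lemma le_twelve_mul_qform {s : ℕ} {l : List ℕ} (hl : SMinimal s l) :
    3 * (2 * l.sum - s * l.length) ^ 2
      + s * l.length * (3 * s * l.length + 6 * s - 2 * l.length ^ 2 - 6 * l.length - 4)
      ≤ 12 * qform s l := by
  have hG := sum_range_le_qformLinear s l hl.1.pairwise 0 hl.2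
  have hB := six_mul_sum_range (s - l.length) l.length
  simp only [Nat.cast_zero, zero_add, add_zero] at hG
  have := mul_le_mul_of_nonneg_left hG (by positivity : (0 : ℤ) ≤ 12 * s)
  rw [qform_eq_sq_add]
  nlinarith

lemma cubic_le (s u : ℤ) (hu : 3 ≤ u) (hus : u + 1 ≤ s) :
    3 * (15 * s - 40) ≤ u * (3 * s * u + 6 * s - 2 * u ^ 2 - 6 * u - 4) := by
  -- The difference of the two sides is `u - 3` times this quadratic, which is concave in `u`
  -- and positive at both ends `u = 3`, `u = s - 1`.
  have hquot : 0 ≤ -2 * u ^ 2 + (3 * s - 12) * u + 15 * s - 40 := by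
    nlinarith
  nlinarith [mul_nonneg (by linarith : (0 : ℤ) ≤ u - 3) hquot]

lemma le_four_mul_qform_of_three_le_length {s : ℕ} {l : List ℕ} (hl : SMinimal s l)
    (hu : 3 ≤ l.length) : s * (15 * s - 40) ≤ 4 * qform s l := by
  have hus := length_le_of_pairwise_lt hl.1.pairwise hl.2
  have hcubic := cubic_le s l.length (by exact_mod_cast hu) (by norm_cast; omega)
  nlinarith [le_twelve_mul_qform hl, sq_nonneg (2 * (l.sum : ℤ) - s * l.length),
    mul_le_mul_of_nonneg_left hcubic (Nat.cast_nonneg (α := ℤ) s)]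

lemma qform_pair (s a b : ℕ) :
    qform s [a, b] = (a + b : ℤ) ^ 2 + s * (a * (s - a - 3) + b * (s - b - 1)) := by
  simp only [qform_eq_sq_add, qformLinear, List.sum_cons, List.sum_nil, List.length_cons,
    List.length_nil]
  push_cast
  ring

lemma sub_sq_add_le_qform_pair {s a b : ℕ} (hl : SMinimal s [a, b]) :
    ((a + b : ℕ) - s : ℤ) ^ 2 + 2 * s * (s - 2) ≤ qform s [a, b] := by
  have := le_twelve_mul_qform hl
  simp only [List.sum_cons, List.sum_nil, List.length_cons, List.length_nil] at this
  push_cast at this ⊢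
  nlinarith

lemma le_qform_pair_of_sum_eq_succ_or_succ_eq {s a b : ℕ} (hl : SMinimal s [a, b])
    (hd : a + b = s + 1 ∨ a + b + 1 = s) : 3 * (s : ℤ) ^ 2 - 8 * s + 1 ≤ qform s [a, b] := by
  obtain ⟨ha, -⟩ := hl.2 a (by simp)
  obtain ⟨-, hb⟩ := hl.2 b (by simp)
  have hab : a < b := by simpa using hl.1.pairwise
  rw [qform_pair]
  rcases hd with hd | hd
  · rw [show (b : ℤ) = s + 1 - a by omega]
    nlinarith [mul_nonneg (mul_nonneg (Nat.cast_nonneg (α := ℤ) s)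
      (by omega : (0 : ℤ) ≤ a - 2)) (by omega : (0 : ℤ) ≤ s - a - 2)]
  · rw [show (b : ℤ) = s - 1 - a by omega]
    nlinarith [mul_nonneg (mul_nonneg (Nat.cast_nonneg (α := ℤ) s)
      (by omega : (0 : ℤ) ≤ a - 1)) (by omega : (0 : ℤ) ≤ s - a - 3)]

lemma mod_eq_or_mod_add_eq {d s : ℕ} (hd : d < 2 * s) : d % s = d ∨ d % s + s = d := by
  rcases lt_or_ge d s with h | h
  · exact Or.inl (Nat.mod_eq_of_lt h)
  · rw [Nat.mod_eq_sub_mod h, Nat.mod_eq_of_lt (by omega)]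
    omega

theorem stmt8_general (s : ℕ) (l : List ℕ) (hl : SMinimal s l)
    (hu : 2 ≤ l.length) (f : ℕ) (hf : f = l.sum % s) :
    (f = 0 → 2 * (s : ℤ) * ((s : ℤ) - 2) ≤ qform s l) ∧
    ((f = 1 ∨ f = s - 1) → 3 * (s : ℤ) ^ 2 - 8 * s + 1 ≤ qform s l) ∧
    (f ≠ 0 → f ≠ 1 → f ≠ s - 1 → 2 * (s : ℤ) ^ 2 - 4 * s + 4 ≤ qform s l) := by
  obtain hu | hu := hu.eq_or_lt
  · obtain ⟨a, b, rfl⟩ := List.length_eq_two.mp hu.symm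
    have ha := (hl.2 a (by simp)).1
    have hb := (hl.2 b (by simp)).2
    have hab : a < b := by simpa using hl.1.pairwise
    have hq := sub_sq_add_le_qform_pair hl
    have hfs : f < s := hf ▸ Nat.mod_lt _ (by omega)
    have hf' : f = a + b ∨ f + s = a + b := by
      simpa [hf] using mod_eq_or_mod_add_eq (by omega : a + b < 2 * s)
    refine ⟨fun _ => by nlinarith, fun h => le_qform_pair_of_sum_eq_succ_or_succ_eq hl (by omega),
      fun h0 h1 h2 => ?_⟩
    have hfar : 2 ≤ ((a + b : ℕ) - s : ℤ) ∨ ((a + b : ℕ) - s : ℤ) ≤ -2 := by omega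
    rcases hfar with h | h <;> nlinarith
  · have hq := le_four_mul_qform_of_three_le_length hl hu
    have hs : (4 : ℤ) ≤ s := by
      have := length_le_of_pairwise_lt hl.1.pairwise hl.2
      omega
    exact ⟨fun _ => by nlinarith, fun _ => by nlinarith, fun _ _ _ => by nlinarith⟩

/-- Corollary 8.8: lower bounds for `q_s(λ)` when `u_λ ≥ 2`, according to the
residue `f` of `d_λ` modulo `s`. -/
theorem stmt8 (s : ℕ) (hs : 3 ≤ s) (l : List ℕ) (hl : SMinimal s l)
    (hu : 2 ≤ l.length) (f : ℕ) (hf : f = l.sum % s) :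
    (f = 0 → 2 * (s : ℤ) * ((s : ℤ) - 2) ≤ qform s l) ∧
    ((f = 1 ∨ f = s - 1) → 3 * (s : ℤ) ^ 2 - 8 * s + 1 ≤ qform s l) ∧
    (f ≠ 0 → f ≠ 1 → f ≠ s - 1 → 2 * (s : ℤ) ^ 2 - 4 * s + 4 ≤ qform s l) :=
  stmt8_general s l hl hu f hf
end

section
/- Let h be an h-vector with s = s(h), and define k_i = #{ n ∈ ℕ : h(n) ≥ s + 1 − i } for i = 1, …, s. Then: (i) k_1 < k_2 < ⋯ < k_s; (ii) Σ_{n∈ℕ} h(n) = Σ_{i=1}^{s} k_i; (iii) 1 + Σ_{n∈ℕ} (n−1)·h(n) = 1 + Σ_{i=1}^{s} k_i(k_i − 3)/2 + Σ_{i=1}^{s} (s − i)·k_i; (iv) t(h) − s + 1 = k_1; (v) e(h) + 3 = k_s. -/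
/-- An `h`-vector: a function `ℕ → ℕ`, eventually zero, not identically zero, such
that for some `s ≥ 1` it equals `n+1` for `n ≤ s−1` and is nonincreasing from
`s−1` on. -/
def IsHVector (h : ℕ → ℕ) : Prop :=
  (∃ N, ∀ n, N ≤ n → h n = 0) ∧ (∃ n, h n ≠ 0) ∧
  ∃ s : ℕ, 1 ≤ s ∧ (∀ n < s, h n = n + 1) ∧ ∀ n, s - 1 ≤ n → h (n + 1) ≤ h n

lemma sumIccAux (a : ℕ) : ∀ b : ℕ, a ≤ b →
    2 * ∑ n ∈ Finset.Icc a b, ((n:ℤ) - 1)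
      = ((b:ℤ)+1-a)*((b:ℤ)+1-a-3) + 2*(a:ℤ)*((b:ℤ)+1-a) := by
  intro b hab
  induction b, hab using Nat.le_induction with
  | base => simp; ring
  | succ b hb ih =>
    rw [Finset.sum_Icc_succ_top (by omega)]
    push_cast
    linear_combination ih

/-- The biliaison type `k_i = #{n : h(n) ≥ s+1−i}` of an `h`-vector, and its basic
invariants: (i) the `k_i` are strictly increasing; (ii) `Σ h(n) = Σ k_i`;
(iii) `1 + Σ (n−1)h(n) = 1 + Σ k_i(k_i−3)/2 + Σ (s−i)k_i`;
(iv) `t − s + 1 = k_1`; (v) `e + 3 = k_s` (where `e + 2 = max{n : h(n) > 0}`). -/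
theorem stmt13 (h : ℕ → ℕ) (hh : IsHVector h)
    (s : ℕ) (hsdef : s = sInf {n | h n ≤ n})
    (k : ℕ → ℕ) (hk : ∀ i, k i = Set.ncard {n | s + 1 - i ≤ h n}) :
    (∀ i, 1 ≤ i → i < s → k i < k (i + 1)) ∧
    (∀ N : ℕ, (∀ n, N ≤ n → h n = 0) →
      ∑ n ∈ Finset.range N, h n = ∑ i ∈ Finset.Icc 1 s, k i) ∧
    (∀ N : ℕ, (∀ n, N ≤ n → h n = 0) →
      1 + ∑ n ∈ Finset.range N, ((n : ℤ) - 1) * (h n : ℤ)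
        = 1 + (∑ i ∈ Finset.Icc 1 s, (k i : ℤ) * ((k i : ℤ) - 3) / 2)
          + ∑ i ∈ Finset.Icc 1 s, ((s : ℤ) - (i : ℤ)) * (k i : ℤ)) ∧
    (((sInf {n : ℕ | 1 ≤ n ∧ h n < h (n - 1)} : ℕ) : ℤ) - (s : ℤ) + 1 = (k 1 : ℤ)) ∧
    (sSup {n | 0 < h n} + 1 = k s) := by
  obtain ⟨⟨N₀, hN₀⟩, hne, s₀, hs₀1, hlin, hdec⟩ := hh
  -- h is nonincreasing from s₀ - 1 on
  have hmono : ∀ a b : ℕ, s₀ - 1 ≤ a → a ≤ b → h b ≤ h a := by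
    intro a b ha hab
    induction b, hab using Nat.le_induction with
    | base => exact le_refl _
    | succ b hb ih => exact le_trans (hdec b (le_trans ha hb)) ih
  have hhs1 : h (s₀ - 1) = s₀ := by
    have := hlin (s₀ - 1) (by omega); omega
  have hbound : ∀ n, h n ≤ s₀ := by
    intro n
    rcases lt_or_ge n s₀ with hn | hn
    · rw [hlin n hn]; omega
    · calc h n ≤ h (s₀ - 1) := hmono _ _ le_rfl (by omega)
        _ = s₀ := hhs1
  -- s = s₀
  have hss : s = s₀ := by
    rw [hsdef]
    apply le_antisymm
    · exact Nat.sInf_le (hbound s₀)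
    · by_contra hlt
      push_neg at hlt
      have hne' : {n | h n ≤ n}.Nonempty := ⟨s₀, hbound s₀⟩
      have hm := Nat.sInf_mem hne'
      have := hlin _ hlt
      simp only [Set.mem_setOf_eq] at hm
      omega
  subst hss
  have hs1 : 1 ≤ s := hs₀1
  clear hsdef hne
  -- the maximal element of each level set
  set m : ℕ → ℕ := fun j => sSup {n | j ≤ h n} with hm
  have hbdd : ∀ j, 1 ≤ j → BddAbove {n | j ≤ h n} := by
    intro j hj
    refine ⟨N₀, fun n hn => ?_⟩
    by_contra hc
    push_neg at hc
    have := hN₀ n (le_of_lt hc)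
    simp only [Set.mem_setOf_eq] at hn
    omega
  have hnonempty : ∀ j, j ≤ s → {n | j ≤ h n}.Nonempty := by
    intro j hj
    exact ⟨s - 1, by simp only [Set.mem_setOf_eq]; omega⟩
  have hm_mem : ∀ j, 1 ≤ j → j ≤ s → j ≤ h (m j) := by
    intro j h1 h2
    exact Nat.sSup_mem (hnonempty j h2) (hbdd j h1)
  have hm_le : ∀ j n, 1 ≤ j → j ≤ h n → n ≤ m j := by
    intro j n h1 h2
    exact le_csSup (hbdd j h1) h2
  have hm1 : ∀ j, 1 ≤ j → j ≤ s → s - 1 ≤ m j := by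
    intro j h1 h2
    exact hm_le j (s - 1) h1 (by omega)
  -- each level set is an interval
  have hiff : ∀ j, 1 ≤ j → j ≤ s → ∀ n, j ≤ h n ↔ (j - 1 ≤ n ∧ n ≤ m j) := by
    intro j h1 h2 n
    constructor
    · intro hn
      refine ⟨?_, hm_le j n h1 hn⟩
      by_contra hc
      push_neg at hc
      have := hlin n (by omega)
      omega
    · rintro ⟨ha, hb⟩
      rcases lt_or_ge n s with hn | hn
      · rw [hlin n hn]; omega
      · have := hmono n (m j) (by omega) hb
        have := hm_mem j h1 h2
        omega
  -- formula for k
  have hk2 : ∀ i, 1 ≤ i → i ≤ s → k i + (s - i) = m (s + 1 - i) + 1 := by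
    intro i h1 h2
    have hj1 : 1 ≤ s + 1 - i := by omega
    have hj2 : s + 1 - i ≤ s := by omega
    have hset : {n | s + 1 - i ≤ h n} = Set.Icc (s + 1 - i - 1) (m (s + 1 - i)) := by
      ext n
      rw [Set.mem_Icc, Set.mem_setOf_eq, hiff _ hj1 hj2]
    have hkv : k i = m (s + 1 - i) + 1 - (s + 1 - i - 1) := by
      rw [hk i, hset, ← Finset.coe_Icc, Set.ncard_coe_finset, Nat.card_Icc]
    have := hm1 _ hj1 hj2
    omega
  -- every member of a level set is below any N past the support
  have hsub : ∀ N, (∀ n, N ≤ n → h n = 0) → ∀ j n, 1 ≤ j → j ≤ h n → n < N := by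
    intro N hN j n h1 h2
    by_contra hc
    push_neg at hc
    have := hN n hc
    omega
  -- counting lemma: h n = #{i ∈ [1,s] : s+1-i ≤ h n}
  have hcount : ∀ n, ((Finset.Icc 1 s).filter (fun i => s + 1 - i ≤ h n)).card = h n := by
    intro n
    have hb := hbound n
    have : (Finset.Icc 1 s).filter (fun i => s + 1 - i ≤ h n)
        = Finset.Icc (s + 1 - h n) s := by
      ext i
      simp only [Finset.mem_filter, Finset.mem_Icc]
      omega
    rw [this, Nat.card_Icc]
    omega
  -- filter over range N equals the interval
  have hfilter : ∀ N, (∀ n, N ≤ n → h n = 0) → ∀ i, 1 ≤ i → i ≤ s →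
      (Finset.range N).filter (fun n => s + 1 - i ≤ h n)
        = Finset.Icc (s - i) (m (s + 1 - i)) := by
    intro N hN i h1 h2
    have hj1 : 1 ≤ s + 1 - i := by omega
    have hj2 : s + 1 - i ≤ s := by omega
    ext n
    simp only [Finset.mem_filter, Finset.mem_range, Finset.mem_Icc]
    rw [hiff _ hj1 hj2 n]
    constructor
    · rintro ⟨_, ha, hb⟩; exact ⟨by omega, hb⟩
    · rintro ⟨ha, hb⟩
      have hmem : s + 1 - i ≤ h n := by rw [hiff _ hj1 hj2 n]; exact ⟨by omega, hb⟩
      exact ⟨hsub N hN _ n hj1 hmem, by omega, hb⟩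
  refine ⟨?_, ?_, ?_, ?_, ?_⟩
  -- (i)
  · intro i h1 h2
    have e1 := hk2 i h1 (by omega)
    have e2 := hk2 (i + 1) (by omega) (by omega)
    have hj'1 : 1 ≤ s - i := by omega
    have hj'2 : s - i ≤ s := by omega
    have hji : s + 1 - (i + 1) = s - i := by omega
    rw [hji] at e2
    have hmm : m (s + 1 - i) ≤ m (s - i) := by
      apply hm_le (s - i) _ hj'1
      have := hm_mem (s + 1 - i) (by omega) (by omega)
      omega
    omega
  -- (ii)
  · intro N hN
    calc ∑ n ∈ Finset.range N, h n
        = ∑ n ∈ Finset.range N,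
            ((Finset.Icc 1 s).filter (fun i => s + 1 - i ≤ h n)).card :=
          Finset.sum_congr rfl fun n _ => (hcount n).symm
      _ = ∑ n ∈ Finset.range N, ∑ i ∈ Finset.Icc 1 s,
            if s + 1 - i ≤ h n then 1 else 0 :=
          Finset.sum_congr rfl fun n _ => Finset.card_filter _ _
      _ = ∑ i ∈ Finset.Icc 1 s, ∑ n ∈ Finset.range N,
            if s + 1 - i ≤ h n then 1 else 0 := Finset.sum_comm
      _ = ∑ i ∈ Finset.Icc 1 s,
            ((Finset.range N).filter (fun n => s + 1 - i ≤ h n)).card :=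
          Finset.sum_congr rfl fun i _ => (Finset.card_filter _ _).symm
      _ = ∑ i ∈ Finset.Icc 1 s, k i := by
          refine Finset.sum_congr rfl fun i hi => ?_
          rw [Finset.mem_Icc] at hi
          have hset : {n | s + 1 - i ≤ h n}
              = ↑((Finset.range N).filter (fun n => s + 1 - i ≤ h n)) := by
            ext n
            simp only [Set.mem_setOf_eq, Finset.coe_filter, Finset.mem_range]
            constructor
            · intro hn; exact ⟨hsub N hN _ n (by omega) hn, hn⟩
            · rintro ⟨_, hn⟩; exact hn
          rw [hk i, hset, Set.ncard_coe_finset]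
  -- (iii)
  · intro N hN
    have key : ∑ n ∈ Finset.range N, ((n : ℤ) - 1) * (h n : ℤ)
        = ∑ i ∈ Finset.Icc 1 s,
            ((k i : ℤ) * ((k i : ℤ) - 3) / 2 + ((s : ℤ) - (i : ℤ)) * (k i : ℤ)) := by
      calc ∑ n ∈ Finset.range N, ((n : ℤ) - 1) * (h n : ℤ)
          = ∑ n ∈ Finset.range N, ∑ i ∈ Finset.Icc 1 s,
              (if s + 1 - i ≤ h n then ((n : ℤ) - 1) else 0) := by
            refine Finset.sum_congr rfl fun n _ => ?_
            rw [← Finset.sum_filter, Finset.sum_const, hcount n, nsmul_eq_mul]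
            ring
        _ = ∑ i ∈ Finset.Icc 1 s, ∑ n ∈ Finset.range N,
              (if s + 1 - i ≤ h n then ((n : ℤ) - 1) else 0) := Finset.sum_comm
        _ = ∑ i ∈ Finset.Icc 1 s,
              ((k i : ℤ) * ((k i : ℤ) - 3) / 2 + ((s : ℤ) - (i : ℤ)) * (k i : ℤ)) := by
            refine Finset.sum_congr rfl fun i hi => ?_
            rw [Finset.mem_Icc] at hi
            rw [← Finset.sum_filter, hfilter N hN i hi.1 hi.2]
            have hab : s - i ≤ m (s + 1 - i) := by
              have := hm1 (s + 1 - i) (by omega) (by omega); omega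
            have hg := sumIccAux (s - i) (m (s + 1 - i)) hab
            have hkz := hk2 i hi.1 hi.2
            have hKc : (k i : ℤ) = (m (s + 1 - i) : ℤ) + 1 - ((s - i : ℕ) : ℤ) := by
              omega
            have hsi : ((s - i : ℕ) : ℤ) = (s : ℤ) - (i : ℤ) := by omega
            rw [← hKc, hsi] at hg
            set S := ∑ n ∈ Finset.Icc (s - i) (m (s + 1 - i)), ((n : ℤ) - 1) with hS
            have hdiv : (k i : ℤ) * ((k i : ℤ) - 3) / 2
                = S - ((s : ℤ) - (i : ℤ)) * (k i : ℤ) := by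
              have h2 : (k i : ℤ) * ((k i : ℤ) - 3)
                  = (S - ((s : ℤ) - (i : ℤ)) * (k i : ℤ)) * 2 := by linarith
              rw [h2, Int.mul_ediv_cancel _ two_ne_zero]
            rw [hdiv]; ring
    rw [key, Finset.sum_add_distrib]
    ring
  -- (iv)
  · have hmsv : h (m s) = s := by
      have := hm_mem s hs1 le_rfl
      have := hbound (m s)
      omega
    have hmem : (m s + 1) ∈ {n : ℕ | 1 ≤ n ∧ h n < h (n - 1)} := by
      simp only [Set.mem_setOf_eq, Nat.add_sub_cancel]
      refine ⟨by omega, ?_⟩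
      have : ¬ (m s + 1 ≤ m s) := by omega
      have hlt : ¬ (s ≤ h (m s + 1)) := fun hc => this (hm_le s _ hs1 hc)
      omega
    have hlb : ∀ n ∈ {n : ℕ | 1 ≤ n ∧ h n < h (n - 1)}, m s + 1 ≤ n := by
      rintro n ⟨hn1, hdesc⟩
      by_contra hc
      push_neg at hc
      rcases lt_or_ge n s with hn | hn
      · have e1 := hlin n hn
        have e2 := hlin (n - 1) (by omega)
        omega
      · have e1 : s ≤ h n := by rw [hiff s hs1 le_rfl n]; omega
        have e2 : s ≤ h (n - 1) := by rw [hiff s hs1 le_rfl (n - 1)]; omega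
        have := hbound (n - 1)
        omega
    have ht : sInf {n : ℕ | 1 ≤ n ∧ h n < h (n - 1)} = m s + 1 :=
      le_antisymm (Nat.sInf_le hmem) (hlb _ (Nat.sInf_mem ⟨_, hmem⟩))
    have hk1 := hk2 1 le_rfl hs1
    have : s + 1 - 1 = s := by omega
    rw [this] at hk1
    rw [ht]
    omega
  -- (v)
  · have hset : {n | 0 < h n} = Set.Iic (m 1) := by
      ext n
      simp only [Set.mem_setOf_eq, Set.mem_Iic]
      rw [show (0 < h n) ↔ (1 ≤ h n) from Iff.rfl, hiff 1 le_rfl hs1 n]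
      omega
    rw [hset, csSup_Iic]
    have hks := hk2 s hs1 le_rfl
    have : s + 1 - s = 1 := by omega
    rw [this] at hks
    omega
end

section
/- Let h be an h-vector with e = e(h), and let a ≤ b be positive integers with a ≥ e + 3 and b ≥ e + 4. Define h_D : ℕ → ℤ by h_D(n) = h_{a,b}(n) − h(a + b − 2 − n), where h(m) is interpreted as 0 for m < 0 and h_{a,b} is the complete intersection h-vector of type (a,b). Then h_D takes values in ℕ and is an h-vector of decreasing type. Moreover, if a ≥ e + 4 then s(h_D) = a and t(h_D) = b, while if a = e + 3 then s(h_D) = a and t(h_D) = b − 1. -/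
/-- An `h`-vector is of decreasing type if whenever `h(a) > h(a+1)`, every `n ≥ a`
satisfies `h(n) > h(n+1)` or `h(n) = 0`. -/
def DecreasingType (h : ℕ → ℕ) : Prop :=
  ∀ a : ℕ, h (a + 1) < h a → ∀ n : ℕ, a ≤ n → h (n + 1) < h n ∨ h n = 0

/-- Lemma 6.6(ii): the `h`-vector of a curve linked to an ACM curve with `h`-vector
`h` by a complete intersection of type `(a,b)`, where `a ≥ e+3` and `b ≥ e+4`, is
nonnegative and of decreasing type, with the stated values of `s` and `t`.
Here `e2 = e(h) + 2 = max{n : h(n) > 0}`, the complete intersection `h`-vector is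
`h_{a,b}(n) = max(0, min(n+1, a, a+b−1−n))` (computed in `ℕ` with truncated
subtraction), and `h_D(n) = h_{a,b}(n) − h(a+b−2−n)` with `h(m) = 0` for `m < 0`. -/
theorem stmt14 (h : ℕ → ℕ) (hh : IsHVector h)
    (e2 : ℕ) (he2 : e2 = sSup {n | 0 < h n})
    (a b : ℕ) (ha : 0 < a) (hab : a ≤ b) (hae : e2 + 1 ≤ a) (hbe : e2 + 2 ≤ b)
    (hD : ℕ → ℤ)
    (hhD : ∀ n : ℕ, hD n = ((min (n + 1) (min a (a + b - 1 - n)) : ℕ) : ℤ)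
      - (if n ≤ a + b - 2 then (h (a + b - 2 - n) : ℤ) else 0)) :
    (∀ n, 0 ≤ hD n) ∧
    IsHVector (fun n => (hD n).toNat) ∧
    DecreasingType (fun n => (hD n).toNat) ∧
    (e2 + 2 ≤ a →
      sInf {n : ℕ | (hD n).toNat ≤ n} = a ∧
      sInf {n : ℕ | 1 ≤ n ∧ (hD n).toNat < (hD (n - 1)).toNat} = b) ∧
    (a = e2 + 1 →
      sInf {n : ℕ | (hD n).toNat ≤ n} = a ∧
      sInf {n : ℕ | 1 ≤ n ∧ (hD n).toNat < (hD (n - 1)).toNat} = b - 1) := by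
  obtain ⟨⟨N, hN⟩, ⟨n₀, hn₀⟩, s, hs1, hs2, hs3⟩ := hh
  have hbdd : BddAbove {n | 0 < h n} := ⟨N, fun k hk => by
    by_contra hc
    push_neg at hc
    simp only [Set.mem_setOf_eq] at hk
    rw [hN k (le_of_lt hc)] at hk
    exact absurd hk (lt_irrefl 0)⟩
  have hne : {n | 0 < h n}.Nonempty := ⟨n₀, Nat.pos_of_ne_zero hn₀⟩
  have he2pos : 0 < h e2 := by
    have := Nat.sSup_mem hne hbdd
    rwa [← he2] at this
  have hle2 : ∀ m, 0 < h m → m ≤ e2 := fun m hm => by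
    rw [he2]; exact le_csSup hbdd hm
  have hzero : ∀ m, e2 < m → h m = 0 := fun m hm => by
    by_contra hc
    exact absurd (hle2 m (Nat.pos_of_ne_zero hc)) (by omega)
  have hmono : ∀ m n, s - 1 ≤ m → m ≤ n → h n ≤ h m := by
    intro m n hm hmn
    induction n, hmn using Nat.le_induction with
    | base => exact le_rfl
    | succ n hmn ih => exact le_trans (hs3 n (by omega)) ih
  have hub : ∀ m, h m ≤ m + 1 := by
    intro m
    rcases lt_or_ge m s with hm | hm
    · exact (hs2 m hm).le
    · have h1 : h (s - 1) = s - 1 + 1 := hs2 (s - 1) (by omega)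
      have := hmono (s - 1) m le_rfl (by omega)
      omega
  have h0val : h 0 = 1 := by
    have := hs2 0 (by omega)
    omega
  have hkey : ∀ n, n ≤ a + b - 2 → h (a + b - 2 - n) ≤ min (n + 1) (min a (a + b - 1 - n)) := by
    intro n hn
    rcases le_or_gt (a + b - 2 - n) e2 with hm | hm
    · have h1 := hub (a + b - 2 - n)
      omega
    · rw [hzero _ hm]; omega
  have hnonneg : ∀ n, 0 ≤ hD n := by
    intro n
    rw [hhD n]
    split_ifs with hc
    · have := hkey n hc; omega
    · omega
  have hfval : ∀ n, (hD n).toNat = min (n + 1) (min a (a + b - 1 - n)) - h (a + b - 2 - n) := by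
    intro n
    rw [hhD n]
    split_ifs with hc
    · have := hkey n hc; omega
    · omega
  have L1 : ∀ n, n < a → (hD n).toNat = n + 1 := by
    intro n hn
    have h0 : h (a + b - 2 - n) = 0 := hzero _ (by omega)
    rw [hfval n, h0]
    omega
  have L2 : ∀ n, a ≤ n + 1 → n + 2 ≤ b → (hD n).toNat = a := by
    intro n h1 h2
    have h0 : h (a + b - 2 - n) = 0 := hzero _ (by omega)
    rw [hfval n, h0]
    omega
  have L3 : ∀ n, b - 1 ≤ n → n ≤ a + b - 2 →
      (hD n).toNat = (a + b - 1 - n) - h (a + b - 2 - n) := by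
    intro n h1 h2
    rw [hfval n]
    omega
  have L4 : ∀ n, a + b - 2 < n → (hD n).toNat = 0 := by
    intro n h1
    rw [hfval n]
    omega
  have LStep : ∀ n, b - 1 ≤ n →
      ((hD (n + 1)).toNat ≤ (hD n).toNat ∧
        (0 < (hD n).toNat → (hD (n + 1)).toNat < (hD n).toNat)) := by
    intro n hn
    rcases le_or_gt n (a + b - 2) with hc | hc
    · rcases Nat.eq_zero_or_pos (a + b - 2 - n) with hm | hm
      · have e1 : (hD n).toNat = 0 := by
          rw [L3 n hn hc, hm, h0val]
          omega
        have e2' : (hD (n + 1)).toNat = 0 := L4 _ (by omega)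
        omega
      · have e1 := L3 n hn hc
        have e2' := L3 (n + 1) (by omega) (by omega)
        have hub1 := hub (a + b - 2 - n)
        have hub2 := hub (a + b - 2 - (n + 1))
        have hidx : a + b - 2 - (n + 1) = a + b - 2 - n - 1 := by omega
        rcases le_or_gt s (a + b - 2 - n) with hms | hms
        · have hmo : h (a + b - 2 - n) ≤ h (a + b - 2 - (n + 1)) := by
            rw [hidx]
            exact hmono _ _ (by omega) (by omega)
          omega
        · have hA : h (a + b - 2 - n) = (a + b - 2 - n) + 1 := hs2 _ (by omega)
          have hB : h (a + b - 2 - (n + 1)) = (a + b - 2 - (n + 1)) + 1 := hs2 _ (by omega)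
          omega
    · have e1 : (hD n).toNat = 0 := L4 _ hc
      have e2' : (hD (n + 1)).toNat = 0 := L4 _ (by omega)
      omega
  have hsval : sInf {n : ℕ | (hD n).toNat ≤ n} = a := by
    have hmem : a ∈ {n : ℕ | (hD n).toNat ≤ n} := by
      simp only [Set.mem_setOf_eq]
      rcases le_or_gt (a + 2) b with hc | hc
      · rw [L2 a (by omega) hc]
      · have := L3 a (by omega) (by omega)
        omega
    refine le_antisymm (Nat.sInf_le hmem) ?_
    by_contra hcon
    push_neg at hcon
    have hmm := Nat.sInf_mem (⟨a, hmem⟩ : {n : ℕ | (hD n).toNat ≤ n}.Nonempty)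
    simp only [Set.mem_setOf_eq] at hmm
    rw [L1 _ (by omega : sInf {n : ℕ | (hD n).toNat ≤ n} < a)] at hmm
    omega
  have hnodec : ∀ n, 1 ≤ n → n + 1 ≤ b - 1 → ¬ ((hD n).toNat < (hD (n - 1)).toNat) := by
    intro n h1 h2
    rcases lt_or_ge n a with hc | hc
    · rw [L1 n hc, L1 (n - 1) (by omega)]
      omega
    · rw [L2 n (by omega) (by omega), L2 (n - 1) (by omega) (by omega)]
      omega
  refine ⟨hnonneg, ⟨⟨a + b - 1, fun n hn => L4 n (by omega)⟩, ⟨0, ?_⟩, a, ha,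
    fun n hn => L1 n hn, fun n hn => ?_⟩, ?_, ?_, ?_⟩
  · show (hD 0).toNat ≠ 0
    rw [L1 0 ha]
    omega
  · -- nonincreasing from a - 1
    show (hD (n + 1)).toNat ≤ (hD n).toNat
    rcases le_or_gt (b - 1) n with hc1 | hc1
    · exact (LStep n hc1).1
    · rcases le_or_gt (b - 1) (n + 1) with hc2 | hc2
      · have e1 : (hD n).toNat = a := L2 n (by omega) (by omega)
        have e2' := L3 (n + 1) hc2 (by omega)
        omega
      · have e1 : (hD n).toNat = a := L2 n (by omega) (by omega)
        have e2' : (hD (n + 1)).toNat = a := L2 (n + 1) (by omega) (by omega)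
        omega
  · -- decreasing type
    intro k hk n hn
    have hk' : (hD (k + 1)).toNat < (hD k).toNat := hk
    have hkb : b - 1 ≤ k + 1 := by
      by_contra hcon
      push_neg at hcon
      rcases lt_or_ge (k + 1) a with h1 | h1
      · rw [L1 k (by omega), L1 (k + 1) h1] at hk'
        omega
      · rw [L2 k (by omega) (by omega), L2 (k + 1) (by omega) (by omega)] at hk'
        omega
    rcases eq_or_lt_of_le hn with rfl | hlt
    · exact Or.inl hk
    · rcases Nat.eq_zero_or_pos ((hD n).toNat) with hzn | hzn
      · exact Or.inr hzn
      · exact Or.inl ((LStep n (by omega)).2 hzn)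
  · -- case a ≥ e2 + 2
    intro hae2
    refine ⟨hsval, ?_⟩
    have hza1 : h (a - 1) = 0 := hzero _ (by omega)
    have hmem : b ∈ {n : ℕ | 1 ≤ n ∧ (hD n).toNat < (hD (n - 1)).toNat} := by
      simp only [Set.mem_setOf_eq]
      refine ⟨by omega, ?_⟩
      have e1 : (hD (b - 1)).toNat = a := by
        rw [L3 (b - 1) le_rfl (by omega)]
        have harg : a + b - 2 - (b - 1) = a - 1 := by omega
        rw [harg, hza1]
        omega
      have e2' := L3 b (by omega) (by omega)
      have hub2 := hub (a + b - 2 - b)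
      omega
    refine le_antisymm (Nat.sInf_le hmem) ?_
    by_contra hcon
    push_neg at hcon
    have hmm := Nat.sInf_mem (⟨b, hmem⟩ :
      {n : ℕ | 1 ≤ n ∧ (hD n).toNat < (hD (n - 1)).toNat}.Nonempty)
    simp only [Set.mem_setOf_eq] at hmm
    set j := sInf {n : ℕ | 1 ≤ n ∧ (hD n).toNat < (hD (n - 1)).toNat} with hj
    rcases le_or_gt (j + 1) (b - 1) with hd | hd
    · exact hnodec j hmm.1 hd hmm.2
    · have hjeq : j = b - 1 := by omega
      rw [hjeq] at hmm
      have e1 : (hD (b - 1)).toNat = a := by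
        rw [L3 (b - 1) le_rfl (by omega)]
        have harg : a + b - 2 - (b - 1) = a - 1 := by omega
        rw [harg, hza1]
        omega
      rcases le_or_gt a (b - 1) with hab' | hab'
      · have e3 : (hD (b - 1 - 1)).toNat = a := L2 (b - 1 - 1) (by omega) (by omega)
        omega
      · have e3 : (hD (b - 1 - 1)).toNat = b - 1 - 1 + 1 := L1 _ (by omega)
        omega
  · -- case a = e2 + 1
    intro hae2
    refine ⟨hsval, ?_⟩
    have hza1 : 0 < h (a - 1) := by
      have harg : a - 1 = e2 := by omega
      rw [harg]
      exact he2pos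
    have hub1 := hub (a - 1)
    have hmem : b - 1 ∈ {n : ℕ | 1 ≤ n ∧ (hD n).toNat < (hD (n - 1)).toNat} := by
      simp only [Set.mem_setOf_eq]
      refine ⟨by omega, ?_⟩
      have e1 : (hD (b - 1)).toNat = a - h (a - 1) := by
        have harg : a + b - 2 - (b - 1) = a - 1 := by omega
        rw [L3 (b - 1) le_rfl (by omega), harg]
        omega
      have e3 : (hD (b - 1 - 1)).toNat = a := L2 (b - 1 - 1) (by omega) (by omega)
      omega
    refine le_antisymm (Nat.sInf_le hmem) ?_
    by_contra hcon
    push_neg at hcon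
    have hmm := Nat.sInf_mem (⟨b - 1, hmem⟩ :
      {n : ℕ | 1 ≤ n ∧ (hD n).toNat < (hD (n - 1)).toNat}.Nonempty)
    simp only [Set.mem_setOf_eq] at hmm
    exact hnodec _ hmm.1 (by omega) hmm.2
end

section
/- Let s, d, x be integers with s ≥ 4, d ≥ s(s+1)/2, and d ≥ 11 in case s = 4. If −d < 2x < 0 and x² + dx + (d−4)s ≥ 0, then x ≥ −s − 1. -/
/-- The key numerical estimate in the proof of the main gonality theorem: if
`s ≥ 4`, `d ≥ s(s+1)/2` (with `d ≥ 11` when `s = 4`), `−d/2 < x < 0` and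
`x² + dx + (d−4)s ≥ 0`, then `x ≥ −s−1`. -/
theorem stmt17 (s d x : ℤ) (hs : 4 ≤ s) (hd : s * (s + 1) / 2 ≤ d)
    (hd4 : s = 4 → 11 ≤ d)
    (h1 : -d < 2 * x) (h2 : 2 * x < 0)
    (h3 : 0 ≤ x ^ 2 + d * x + (d - 4) * s) :
    -s - 1 ≤ x := by
  obtain ⟨r, hr⟩ := Int.even_mul_succ_self s
  rw [hr] at hd
  have h2d : s * (s + 1) ≤ 2 * d := by omega
  by_contra h
  push_neg at h
  have hx : x ≤ -s - 2 := by omega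
  rcases eq_or_lt_of_le hs with hs4 | hs5
  · have hd11 : 11 ≤ d := hd4 hs4.symm
    nlinarith [mul_nonneg (by linarith : (0:ℤ) ≤ -s - 2 - x) (by nlinarith : (0:ℤ) ≤ x + d - s - 2)]
  · nlinarith [mul_nonneg (by linarith : (0:ℤ) ≤ -s - 2 - x) (by nlinarith : (0:ℤ) ≤ x + d - s - 2)]
end
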